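/- arXiv:2003.13639 — 2 statements merged into one kernel-verified Lean document; each statement's English description precedes it below -/
import Mathlib

section
/- For any prime $d \ge 5$, the state $\ket{\mathrm{AME}(5,d)'} = \frac{1}{d}\sum_{i,j=0}^{d-1}\ket{i,j,i+j,2i+j,3i+j}$ (arithmetic mod $d$) is $2$-uniform: every reduction to two of the five parties equals $\frac{1}{d^2}\mathrm{Id}_{d^2}$. -/
/-- Combine an assignment on `S` and on its complement into a full assignment. -/
def mergeFn {N : ℕ} {A : Type*} (S : Finset (Fin N)) (a : {i // i ∈ S} → A)
    (g : {i // i ∉ S} → A) : Fin N → A :=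
  fun i => if h : i ∈ S then a ⟨i, h⟩ else g ⟨i, h⟩

/-- The reduced density matrix of a pure state `ψ` on the subsystem `S`. -/
noncomputable def reducedMatrix {N : ℕ} {A : Type*} [Fintype A] [DecidableEq A]
    (ψ : (Fin N → A) → ℂ) (S : Finset (Fin N)) :
    Matrix ({i // i ∈ S} → A) ({i // i ∈ S} → A) ℂ :=
  fun a b => ∑ g : {i // i ∉ S} → A,
    ψ (mergeFn S a g) * star (ψ (mergeFn S b g))

/-!
The state is the uniform superposition of the codewords `(x, y, x + y, 2x + y, 3x + y)` of a
two-dimensional linear code over `𝔽_d`. Its generator columns `(1,0), (0,1), (1,1), (2,1), (3,1)`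
are pairwise independent once `2, 3 ≠ 0`, so the values of a codeword on any two coordinates
determine it and range over all of `𝔽_d²`. Hence the two kept parties see each codeword exactly
once, and distinct codewords already differ on the three traced-out parties, so the reduced matrix
is `1/d²` times the identity.
-/

open Function

section CodeState

variable {N : ℕ} {A P : Type*}

theorem mergeFn_eq_iff (S : Finset (Fin N)) (a : {i // i ∈ S} → A) (g : {i // i ∉ S} → A)
    (f : Fin N → A) :
    mergeFn S a g = f ↔
      (fun i : {i // i ∈ S} => f i) = a ∧ (fun i : {i // i ∉ S} => f i) = g := by
  constructor
  · rintro rfl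
    exact ⟨funext fun i => dif_pos i.2, funext fun i => dif_neg i.2⟩
  · rintro ⟨rfl, rfl⟩
    funext i
    by_cases hi : i ∈ S <;> simp [mergeFn, hi]

noncomputable def codeState [DecidableEq A] [Fintype P] (E : P → Fin N → A) (c : ℂ) :
    (Fin N → A) → ℂ :=
  fun f => c * ∑ p, if f = E p then 1 else 0

theorem codeState_mergeFn [DecidableEq A] [Fintype P] (E : P → Fin N → A) (c : ℂ)
    {S : Finset (Fin N)} (e : P ≃ ({i // i ∈ S} → A)) (he : ∀ p i, e p i = E p i)
    (a : {i // i ∈ S} → A) (g : {i // i ∉ S} → A) :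
    codeState E c (mergeFn S a g) =
      c * if (fun i : {i // i ∉ S} => E (e.symm a) i) = g then 1 else 0 := by
  classical
  have hcond : ∀ p,
      mergeFn S a g = E p ↔ p = e.symm a ∧ (fun i : {i // i ∉ S} => E p i) = g := by
    intro p
    rw [mergeFn_eq_iff, e.eq_symm_apply, funext_iff (f := e p)]
    simp only [he, funext_iff]
  unfold codeState
  congr 1
  rw [Finset.sum_congr rfl fun p _ => if_congr (hcond p) rfl rfl]
  simp only [ite_and, Finset.sum_ite_eq', Finset.mem_univ, if_true]

theorem reducedMatrix_codeState [Fintype A] [DecidableEq A] [Fintype P] (E : P → Fin N → A)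
    (c : ℂ) {S : Finset (Fin N)} (hS : Bijective fun p (i : {i // i ∈ S}) => E p i)
    (hSc : Injective fun p (i : {i // i ∉ S}) => E p i) :
    reducedMatrix (codeState E c) S = (c * star c) • (1 : Matrix _ _ ℂ) := by
  ext a b
  set e := Equiv.ofBijective _ hS
  have hcomp : (fun i : {i // i ∉ S} => E (e.symm a) i) =
      (fun i : {i // i ∉ S} => E (e.symm b) i) ↔ a = b :=
    (hSc.comp e.symm.injective).eq_iff
  simp only [reducedMatrix, codeState_mergeFn E c e (fun _ _ => rfl), apply_ite star,
    star_zero, mul_ite, mul_one, mul_zero, ite_mul, zero_mul, Finset.sum_ite_eq,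
    Finset.mem_univ, if_true, hcomp, Matrix.smul_apply, Matrix.one_apply, smul_eq_mul]

end CodeState

section Codeword

variable {K : Type*} {N : ℕ}

def codeword [CommRing K] (α β : Fin N → K) (p : K × K) : Fin N → K :=
  fun k => α k * p.1 + β k * p.2

theorem codeword_restrict_injective [Field K] {α β : Fin N → K}
    (hαβ : Pairwise fun k l => α k * β l - α l * β k ≠ 0) {q : Fin N → Prop} {k l : Fin N}
    (hk : q k) (hl : q l) (hkl : k ≠ l) :
    Injective fun p (i : {i // q i}) => codeword α β p i := by
  intro p p' h
  have hk' : codeword α β p k = codeword α β p' k := congrFun h ⟨k, hk⟩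
  have hl' : codeword α β p l = codeword α β p' l := congrFun h ⟨l, hl⟩
  simp only [codeword] at hk' hl'
  have hx : (α k * β l - α l * β k) * (p.1 - p'.1) = 0 := by
    linear_combination β l * hk' - β k * hl'
  have hy : (α k * β l - α l * β k) * (p.2 - p'.2) = 0 := by
    linear_combination α k * hl' - α l * hk'
  exact Prod.ext (sub_eq_zero.mp ((mul_eq_zero.mp hx).resolve_left (hαβ hkl)))
    (sub_eq_zero.mp ((mul_eq_zero.mp hy).resolve_left (hαβ hkl)))

theorem codeword_restrict_bijective [Field K] [Fintype K] {α β : Fin N → K}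
    (hαβ : Pairwise fun k l => α k * β l - α l * β k ≠ 0) {S : Finset (Fin N)}
    (hS : S.card = 2) :
    Bijective fun p (i : {i // i ∈ S}) => codeword α β p i := by
  obtain ⟨k, l, hkl, hSkl⟩ := Finset.card_eq_two.mp hS
  refine (Fintype.bijective_iff_injective_and_card _).mpr
    ⟨codeword_restrict_injective hαβ (q := (· ∈ S)) (by simp [hSkl]) (by simp [hSkl]) hkl,
      ?_⟩
  simp [hS, sq]

end Codeword

theorem eq_codeword_ame5_iff {K : Type*} [CommRing K] (f : Fin 5 → K) (x y : K) :
    f = codeword ![1, 0, 1, 2, 3] ![0, 1, 1, 1, 1] (x, y) ↔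
      f 0 = x ∧ f 1 = y ∧ f 2 = x + y ∧ f 3 = 2 * x + y ∧ f 4 = 3 * x + y := by
  constructor
  · rintro rfl
    simp [codeword]
  · rintro ⟨h0, h1, h2, h3, h4⟩
    funext k
    fin_cases k <;> simp [codeword, *]

theorem pairwise_minor_ame5_ne_zero {K : Type*} [Field K] (h2 : (2 : K) ≠ 0) (h3 : (3 : K) ≠ 0) :
    Pairwise fun k l : Fin 5 =>
      (![1, 0, 1, 2, 3] : Fin 5 → K) k * ![0, 1, 1, 1, 1] l
        - ![1, 0, 1, 2, 3] l * ![0, 1, 1, 1, 1] k ≠ 0 := by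
  intro k l
  fin_cases k <;> fin_cases l <;> norm_num [h2, h3]

/-- For any prime `d ≥ 5`, the state `(1/d) ∑_{i,j} |i, j, i+j, 2i+j, 3i+j⟩`
(arithmetic mod `d`) is 2-uniform: every two-party reduction is `(1/d²)·Id`. -/
theorem ame5d_prime_two_uniform {d : ℕ} [NeZero d] (hp : d.Prime) (hd : 5 ≤ d) :
    ∀ S : Finset (Fin 5), S.card = 2 →
      reducedMatrix (fun f : Fin 5 → ZMod d =>
        ((d : ℂ))⁻¹ * ∑ i : ZMod d, ∑ j : ZMod d,
          if f 0 = i ∧ f 1 = j ∧ f 2 = i + j ∧ f 3 = 2 * i + j ∧ f 4 = 3 * i + j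
          then 1 else 0) S
      = (((d : ℂ) ^ 2)⁻¹) • (1 : Matrix _ _ ℂ) := by
  intro S hS
  have : Fact d.Prime := ⟨hp⟩
  have hcast : ∀ k : ℕ, 0 < k → k < d → (k : ZMod d) ≠ 0 := fun k hk hkd h =>
    absurd (Nat.le_of_dvd hk ((ZMod.natCast_eq_zero_iff k d).mp h)) (by omega)
  have hminor := pairwise_minor_ame5_ne_zero (K := ZMod d)
    (by exact_mod_cast hcast 2 (by norm_num) (by omega))
    (by exact_mod_cast hcast 3 (by norm_num) (by omega))
  have hcompl : 1 < Sᶜ.card := by simp [Finset.card_compl, hS]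
  obtain ⟨k, hk, l, hl, hkl⟩ := Finset.one_lt_card.mp hcompl
  convert reducedMatrix_codeState (codeword ![1, 0, 1, 2, 3] ![0, 1, 1, 1, 1]) (d : ℂ)⁻¹
    (codeword_restrict_bijective hminor hS)
    (codeword_restrict_injective hminor (q := (· ∉ S)) (Finset.mem_compl.mp hk)
      (Finset.mem_compl.mp hl) hkl) using 2
  · funext f
    simp only [codeState, Fintype.sum_prod_type, eq_codeword_ame5_iff]
  · simp [sq]
end

section
/- For any $d \ge 2$, the state $\ket{\mathrm{AME}(5,d)} = \frac{1}{\sqrt{d^3}}\sum_{i,j,k=0}^{d-1}\omega^{(3i+j)k}\,\ket{i,j,i+j,2i+j+k,k}$, where $\omega = e^{2\pi i/d}$ and arithmetic is mod $d$, is $2$-uniform: every reduction to two of the five parties is $\frac{1}{d^2}\mathrm{Id}_{d^2}$. -/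
/-!
The state is `(√(d³))⁻¹ ∑_{f ∈ C} ω^{(3 f₀ + f₁) f₄} |f⟩`, where `C` is the set of `f` with
`f₂ = f₀ + f₁` and `f₃ = 2 f₀ + f₁ + f₄`. For each pair of parties `{p, q}` there is a third
party `c₀` such that the values at `p`, `q` and `c₀` determine the codeword, so every entry of the
reduction to `{p, q}` collapses to a single sum over the value `x` at `c₀`. For eight of the ten
pairs the other three parties already determine the values at `p` and `q`, so the reduction is
diagonal with entries `d / d³`. For `{0, 2}` (when `d` is even) and `{3, 4}` they do not, and the
off-diagonal entries are character sums `∑ₓ ω^{t x + c}` with `t ≠ 0`, which vanish.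
-/

open ZMod

namespace AME5

lemma inv_sqrt_mul_star {d : ℕ} (u v : ℂ) :
    ((Real.sqrt (d ^ 3) : ℂ))⁻¹ * u * star (((Real.sqrt (d ^ 3) : ℂ))⁻¹ * v) =
      ((d : ℂ) ^ 3)⁻¹ * (u * star v) := by
  have hsq : ((Real.sqrt (d ^ 3) : ℂ)) * (Real.sqrt (d ^ 3) : ℂ) = (d : ℂ) ^ 3 := by
    rw [← Complex.ofReal_mul, Real.mul_self_sqrt (by positivity)]
    push_cast
    rfl
  rw [star_mul, star_inv₀, Complex.star_def, Complex.conj_ofReal, ← hsq, mul_inv]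
  ring

variable {d : ℕ} [NeZero d]

lemma exp_pow_val_eq_stdAddChar (t : ZMod d) :
    Complex.exp (2 * Real.pi * Complex.I / d) ^ t.val = stdAddChar t := by
  rw [← Complex.exp_nat_mul, stdAddChar_apply, toCircle_apply]
  ring_nf

lemma stdAddChar_mul_star (s t : ZMod d) :
    stdAddChar s * star (stdAddChar t) = (stdAddChar (s - t) : ℂ) := by
  rw [sub_eq_add_neg, AddChar.map_add_eq_mul, AddChar.map_neg_eq_conj, Complex.star_def]

lemma sum_stdAddChar_mul_add_eq_zero {t : ZMod d} (ht : t ≠ 0) (c : ZMod d) :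
    ∑ x, (stdAddChar (x * t + c) : ℂ) = 0 := by
  simp_rw [AddChar.map_add_eq_mul]
  rw [← Finset.sum_mul, AddChar.sum_mulShift t (isPrimitive_stdAddChar d), if_neg ht,
    Nat.cast_zero, zero_mul]

noncomputable def ameState (d : ℕ) [NeZero d] (f : Fin 5 → ZMod d) : ℂ :=
  ((Real.sqrt (d ^ 3) : ℂ))⁻¹ * ∑ i : ZMod d, ∑ j : ZMod d, ∑ k : ZMod d,
    if f 0 = i ∧ f 1 = j ∧ f 2 = i + j ∧ f 3 = 2 * i + j + k ∧ f 4 = k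
    then Complex.exp (2 * Real.pi * Complex.I / d) ^ (((3 * i + j) * k).val)
    else 0

def IsCodeword (f : Fin 5 → ZMod d) : Prop :=
  f 2 = f 0 + f 1 ∧ f 3 = 2 * f 0 + f 1 + f 4

instance : DecidablePred (IsCodeword (d := d)) := fun _ => instDecidableAnd

def phase (f : Fin 5 → ZMod d) : ZMod d := (3 * f 0 + f 1) * f 4

noncomputable def amp (f : Fin 5 → ZMod d) : ℂ :=
  if IsCodeword f then stdAddChar (phase f) else 0

lemma ameState_apply (f : Fin 5 → ZMod d) :
    ameState d f = ((Real.sqrt (d ^ 3) : ℂ))⁻¹ * amp f := by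
  have hsupp (i j k : ZMod d) :
      (f 0 = i ∧ f 1 = j ∧ f 2 = i + j ∧ f 3 = 2 * i + j + k ∧ f 4 = k) ↔
        (f 0 = i ∧ f 1 = j ∧ f 4 = k ∧ IsCodeword f) := by
    grind [IsCodeword]
  rw [ameState, amp]
  simp_rw [hsupp, ite_and, exp_pow_val_eq_stdAddChar]
  simp [phase]

section Reindex

variable {A : Type*} {p q c₀ c₁ c₂ : Fin 5}

def placeFn (p q c₀ c₁ : Fin 5) (α β x y z : A) : Fin 5 → A :=
  fun i => if i = p then α else if i = q then β else if i = c₀ then x else if i = c₁ then y else z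

lemma sum_mergeFn_pair [Fintype A] {M : Type*} [AddCommMonoid M]
    (hperm : [p, q, c₀, c₁, c₂].Perm (List.finRange 5))
    (a b : {i // i ∈ ({p, q} : Finset (Fin 5))} → A) (G : (Fin 5 → A) → (Fin 5 → A) → M) :
    ∑ g, G (mergeFn {p, q} a g) (mergeFn {p, q} b g) =
      ∑ x, ∑ y, ∑ z, G (placeFn p q c₀ c₁ (a ⟨p, by simp⟩) (a ⟨q, by simp⟩) x y z)
        (placeFn p q c₀ c₁ (b ⟨p, by simp⟩) (b ⟨q, by simp⟩) x y z) := by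
  have hcover (i : Fin 5) : i = p ∨ i = q ∨ i = c₀ ∨ i = c₁ ∨ i = c₂ := by
    simpa using hperm.mem_iff.2 (List.mem_finRange i)
  have hnd := hperm.nodup_iff.2 (List.nodup_finRange 5)
  simp only [List.nodup_cons, List.mem_cons, List.not_mem_nil, or_false] at hnd
  have hc : ∀ {c}, c = c₀ ∨ c = c₁ ∨ c = c₂ → c ∉ ({p, q} : Finset (Fin 5)) := by
    rintro c (rfl | rfl | rfl) <;> simp_all [eq_comm]
  let e : A × A × A → ({i // i ∉ ({p, q} : Finset (Fin 5))} → A) :=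
    fun t i => if i.1 = c₀ then t.1 else if i.1 = c₁ then t.2.1 else t.2.2
  have he : Function.Bijective e := by
    refine (Function.bijective_iff_has_inverse).2
      ⟨fun g => (g ⟨c₀, hc (.inl rfl)⟩, g ⟨c₁, hc (.inr (.inl rfl))⟩,
        g ⟨c₂, hc (.inr (.inr rfl))⟩), fun t => by simp_all [e, eq_comm], fun g => ?_⟩
    funext ⟨i, hi⟩
    rcases hcover i with rfl | rfl | rfl | rfl | rfl
    · simp at hi
    · simp at hi
    all_goals simp_all [e, eq_comm]
  have hmerge (a : {i // i ∈ ({p, q} : Finset (Fin 5))} → A) (t : A × A × A) :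
      mergeFn {p, q} a (e t) =
        placeFn p q c₀ c₁ (a ⟨p, by simp⟩) (a ⟨q, by simp⟩) t.1 t.2.1 t.2.2 := by
    funext i
    rcases hcover i with rfl | rfl | rfl | rfl | rfl <;> simp_all [mergeFn, placeFn, e, eq_comm]
  rw [← Fintype.sum_bijective e he _ _ (fun _ => rfl)]
  simp only [Fintype.sum_prod_type, hmerge]

end Reindex

section Marginal

variable {p q c₀ c₁ : Fin 5}

/-- `d³` times the `((α, β), (α', β'))` entry of the reduction to `{p, q}`; the parties `c₀`, `c₁`
and the remaining one carry `x`, `y`, `z`. -/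
noncomputable def marginalSum (p q c₀ c₁ : Fin 5) (α β α' β' : ZMod d) : ℂ :=
  ∑ x, ∑ y, ∑ z,
    amp (placeFn p q c₀ c₁ α β x y z) * star (amp (placeFn p q c₀ c₁ α' β' x y z))

def IsUniformPair (p q c₀ c₁ : Fin 5) : Prop :=
  ∀ α β α' β' : ZMod d,
    marginalSum p q c₀ c₁ α β α' β' = if α = α' ∧ β = β' then (d : ℂ) else 0

variable (Y Z : ZMod d → ZMod d → ZMod d → ZMod d)

lemma marginalSum_eq_sum_ite
    (hsol : ∀ α β x y z,
      IsCodeword (placeFn p q c₀ c₁ α β x y z) ↔ y = Y α β x ∧ z = Z α β x)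
    (α β α' β' : ZMod d) :
    marginalSum p q c₀ c₁ α β α' β' = ∑ x,
      if Y α β x = Y α' β' x ∧ Z α β x = Z α' β' x then
        stdAddChar (phase (placeFn p q c₀ c₁ α β x (Y α β x) (Z α β x)) -
          phase (placeFn p q c₀ c₁ α' β' x (Y α β x) (Z α β x)))
      else 0 := by
  refine Finset.sum_congr rfl fun x _ => ?_
  rw [← Fintype.sum_prod_type', Fintype.sum_eq_single (Y α β x, Z α β x)]
  · simp only [amp, hsol, and_self, if_true]
    split_ifs
    · exact stdAddChar_mul_star _ _
    · rw [star_zero, mul_zero]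
  · rintro ⟨y, z⟩ hyz
    rw [amp, if_neg, zero_mul]
    rwa [hsol, ← Prod.mk.injEq]

lemma isUniformPair_of_offDiag
    (hsol : ∀ α β x y z,
      IsCodeword (placeFn p q c₀ c₁ α β x y z) ↔ y = Y α β x ∧ z = Z α β x)
    (hoff : ∀ α β α' β' : ZMod d, ¬(α = α' ∧ β = β') → marginalSum p q c₀ c₁ α β α' β' = 0) :
    IsUniformPair (d := d) p q c₀ c₁ := by
  intro α β α' β'
  split_ifs with h
  · obtain ⟨rfl, rfl⟩ := h
    simp [marginalSum_eq_sum_ite Y Z hsol, ZMod.card]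
  · exact hoff α β α' β' h

lemma isUniformPair_of_injective
    (hsol : ∀ α β x y z,
      IsCodeword (placeFn p q c₀ c₁ α β x y z) ↔ y = Y α β x ∧ z = Z α β x)
    (hinj : ∀ α β α' β' x, Y α β x = Y α' β' x → Z α β x = Z α' β' x → α = α' ∧ β = β') :
    IsUniformPair (d := d) p q c₀ c₁ :=
  isUniformPair_of_offDiag Y Z hsol fun α β α' β' hne => by
    rw [marginalSum_eq_sum_ite Y Z hsol]
    exact Finset.sum_eq_zero fun x _ => if_neg fun h => hne (hinj _ _ _ _ x h.1 h.2)

end Marginal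

lemma isUniformPair_01 : IsUniformPair (d := d) 0 1 4 2 :=
  isUniformPair_of_injective (fun α β _ => α + β) (fun α β x => 2 * α + β + x)
    (by grind [IsCodeword, placeFn]) (by grind)

lemma isUniformPair_02 : IsUniformPair (d := d) 0 2 4 1 := by
  have hsol : ∀ α β x y z : ZMod d, IsCodeword (placeFn 0 2 4 1 α β x y z) ↔
      y = β - α ∧ z = α + β + x := by
    grind [IsCodeword, placeFn]
  refine isUniformPair_of_offDiag _ _ hsol fun α β α' β' hne => ?_
  rw [marginalSum_eq_sum_ite _ _ hsol]
  by_cases h : β - α = β' - α' ∧ α + β = α' + β'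
  · -- `h` gives `2 * (α - α') = 0`, so `3 * (α - α') = 0` would force `α = α'`.
    have ht : 3 * (α - α') ≠ 0 := fun h₃ =>
      hne ⟨by linear_combination h₃ - h.2 + h.1, by linear_combination h₃ - h.2 + 2 * h.1⟩
    calc _ = ∑ x, (stdAddChar (x * (3 * (α - α')) + 0) : ℂ) :=
          Finset.sum_congr rfl fun x _ => by
            rw [if_pos (by grind)]
            simp only [phase, placeFn, Fin.reduceEq, if_true, if_false]
            ring_nf
      _ = 0 := sum_stdAddChar_mul_add_eq_zero ht 0
  · exact Finset.sum_eq_zero fun x _ => if_neg (by grind)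

lemma isUniformPair_03 : IsUniformPair (d := d) 0 3 1 2 :=
  isUniformPair_of_injective (fun α _ x => α + x) (fun α β x => β - 2 * α - x)
    (by grind [IsCodeword, placeFn]) (by grind)

lemma isUniformPair_04 : IsUniformPair (d := d) 0 4 1 2 :=
  isUniformPair_of_injective (fun α _ x => α + x) (fun α β x => 2 * α + x + β)
    (by grind [IsCodeword, placeFn]) (by grind)

lemma isUniformPair_12 : IsUniformPair (d := d) 1 2 4 0 :=
  isUniformPair_of_injective (fun α β _ => β - α) (fun α β x => 2 * β - α + x)
    (by grind [IsCodeword, placeFn]) (by grind)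

lemma isUniformPair_13 : IsUniformPair (d := d) 1 3 0 2 :=
  isUniformPair_of_injective (fun α _ x => x + α) (fun α β x => β - 2 * x - α)
    (by grind [IsCodeword, placeFn]) (by grind)

lemma isUniformPair_14 : IsUniformPair (d := d) 1 4 0 2 :=
  isUniformPair_of_injective (fun α _ x => x + α) (fun α β x => 2 * x + α + β)
    (by grind [IsCodeword, placeFn]) (by grind)

lemma isUniformPair_23 : IsUniformPair (d := d) 2 3 0 1 :=
  isUniformPair_of_injective (fun α _ x => α - x) (fun α β x => β - α - x)
    (by grind [IsCodeword, placeFn]) (by grind)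

lemma isUniformPair_24 : IsUniformPair (d := d) 2 4 0 1 :=
  isUniformPair_of_injective (fun α _ x => α - x) (fun α β x => α + x + β)
    (by grind [IsCodeword, placeFn]) (by grind)

lemma isUniformPair_34 : IsUniformPair (d := d) 3 4 0 1 := by
  have hsol : ∀ α β x y z : ZMod d, IsCodeword (placeFn 3 4 0 1 α β x y z) ↔
      y = α - β - 2 * x ∧ z = α - β - x := by
    grind [IsCodeword, placeFn]
  refine isUniformPair_of_offDiag _ _ hsol fun α β α' β' hne => ?_
  rw [marginalSum_eq_sum_ite _ _ hsol]
  by_cases h : α - β = α' - β'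
  · have ht : β - β' ≠ 0 := fun h₀ => hne (by grind)
    calc _ = ∑ x, (stdAddChar (x * (β - β') + (α - β) * (β - β')) : ℂ) :=
          Finset.sum_congr rfl fun x _ => by
            rw [if_pos (by grind)]
            simp only [phase, placeFn, Fin.reduceEq, if_true, if_false]
            ring_nf
      _ = 0 := sum_stdAddChar_mul_add_eq_zero ht _
  · exact Finset.sum_eq_zero fun x _ => if_neg (by grind)

lemma eq_iff_of_pair {ι A : Type*} [DecidableEq ι] {p q : ι}
    {a b : {i // i ∈ ({p, q} : Finset ι)} → A} :
    a = b ↔ a ⟨p, by simp⟩ = b ⟨p, by simp⟩ ∧ a ⟨q, by simp⟩ = b ⟨q, by simp⟩ := by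
  refine ⟨by rintro rfl; simp, fun ⟨hp, hq⟩ => funext fun ⟨i, hi⟩ => ?_⟩
  rcases Finset.mem_insert.1 hi with rfl | hi
  · exact hp
  · rw [Finset.mem_singleton] at hi
    subst hi
    exact hq

lemma reducedMatrix_ameState_pair {p q c₀ c₁ : Fin 5} (c₂ : Fin 5)
    (hperm : [p, q, c₀, c₁, c₂].Perm (List.finRange 5))
    (huni : IsUniformPair (d := d) p q c₀ c₁) :
    reducedMatrix (ameState d) {p, q} = ((d : ℂ) ^ 2)⁻¹ • (1 : Matrix _ _ ℂ) := by
  ext a b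
  calc reducedMatrix (ameState d) {p, q} a b
      = ((d : ℂ) ^ 3)⁻¹ * marginalSum p q c₀ c₁
          (a ⟨p, by simp⟩) (a ⟨q, by simp⟩) (b ⟨p, by simp⟩) (b ⟨q, by simp⟩) := by
        simp only [reducedMatrix, ameState_apply, inv_sqrt_mul_star]
        rw [sum_mergeFn_pair hperm a b fun f g => ((d : ℂ) ^ 3)⁻¹ * (amp f * star (amp g))]
        simp only [marginalSum, Finset.mul_sum]
    _ = _ := by
        rw [huni, Matrix.smul_apply, Matrix.one_apply]
        by_cases hab : a = b
        · subst hab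
          simp only [and_self, if_true, smul_eq_mul, mul_one]
          field_simp
        · rw [if_neg (mt eq_iff_of_pair.2 hab), if_neg hab, mul_zero, smul_zero]

theorem reducedMatrix_ameState_of_card_eq_two {S : Finset (Fin 5)} (hS : S.card = 2) :
    reducedMatrix (ameState d) S = ((d : ℂ) ^ 2)⁻¹ • (1 : Matrix _ _ ℂ) := by
  have hpairs : ∀ T : Finset (Fin 5), T.card = 2 →
      T = {0, 1} ∨ T = {0, 2} ∨ T = {0, 3} ∨ T = {0, 4} ∨ T = {1, 2} ∨
        T = {1, 3} ∨ T = {1, 4} ∨ T = {2, 3} ∨ T = {2, 4} ∨ T = {3, 4} := by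
    decide
  rcases hpairs S hS with rfl | rfl | rfl | rfl | rfl | rfl | rfl | rfl | rfl | rfl
  · exact reducedMatrix_ameState_pair 3 (by decide) isUniformPair_01
  · exact reducedMatrix_ameState_pair 3 (by decide) isUniformPair_02
  · exact reducedMatrix_ameState_pair 4 (by decide) isUniformPair_03
  · exact reducedMatrix_ameState_pair 3 (by decide) isUniformPair_04
  · exact reducedMatrix_ameState_pair 3 (by decide) isUniformPair_12
  · exact reducedMatrix_ameState_pair 4 (by decide) isUniformPair_13
  · exact reducedMatrix_ameState_pair 3 (by decide) isUniformPair_14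
  · exact reducedMatrix_ameState_pair 4 (by decide) isUniformPair_23
  · exact reducedMatrix_ameState_pair 3 (by decide) isUniformPair_24
  · exact reducedMatrix_ameState_pair 2 (by decide) isUniformPair_34

end AME5

theorem ame5d_two_uniform_general {d : ℕ} [NeZero d] :
    ∀ S : Finset (Fin 5), S.card = 2 →
      reducedMatrix (fun f : Fin 5 → ZMod d =>
        ((Real.sqrt (d ^ 3) : ℂ))⁻¹ * ∑ i : ZMod d, ∑ j : ZMod d, ∑ k : ZMod d,
          if f 0 = i ∧ f 1 = j ∧ f 2 = i + j ∧ f 3 = 2 * i + j + k ∧ f 4 = k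
          then Complex.exp (2 * Real.pi * Complex.I / d) ^ (((3 * i + j) * k).val)
          else 0) S
      = (((d : ℂ) ^ 2)⁻¹) • (1 : Matrix _ _ ℂ) :=
  fun _ hS => AME5.reducedMatrix_ameState_of_card_eq_two hS

/-- For any `d ≥ 2`, the state
`(1/√(d³)) ∑_{i,j,k} ω^{(3i+j)k} |i, j, i+j, 2i+j+k, k⟩` with `ω = e^{2πi/d}`
(arithmetic mod `d`) is 2-uniform: every two-party reduction is `(1/d²)·Id`. -/
theorem ame5d_two_uniform {d : ℕ} [NeZero d] (hd : 2 ≤ d) :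
    ∀ S : Finset (Fin 5), S.card = 2 →
      reducedMatrix (fun f : Fin 5 → ZMod d =>
        ((Real.sqrt (d ^ 3) : ℂ))⁻¹ * ∑ i : ZMod d, ∑ j : ZMod d, ∑ k : ZMod d,
          if f 0 = i ∧ f 1 = j ∧ f 2 = i + j ∧ f 3 = 2 * i + j + k ∧ f 4 = k
          then Complex.exp (2 * Real.pi * Complex.I / d) ^ (((3 * i + j) * k).val)
          else 0) S
      = (((d : ℂ) ^ 2)⁻¹) • (1 : Matrix _ _ ℂ) :=
  ame5d_two_uniform_general
end
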